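/- For every g > 1 there exists a constant K > 0 such that for all (a,b) ∈ ℝ²: P(a,b) ≥ K · min{(b−1)² + a², (b+1)² + a², b² + (a−1)², b² + (a+1)²}; consequently √(a² + b²) ≤ 1 + √(P(a,b)/K) for all (a,b) ∈ ℝ². -/
import Mathlib

/-- `P(a,b) = (1/4)(a²+b²−1)² + (1/2)(g−1)a²b²`. -/
noncomputable def Pfun (g a b : ℝ) : ℝ :=
  (1/4) * (a ^ 2 + b ^ 2 - 1) ^ 2 + (1/2) * (g - 1) * a ^ 2 * b ^ 2

lemma keyH (a b : ℝ) (ha : 0 ≤ a) (hab : b^2 ≤ a^2) :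
    (1/8) * (b^2 + (a-1)^2) ≤ (1/4)*(a^2+b^2-1)^2 + a^2*b^2 := by
  nlinarith [sq_nonneg (a^2+b^2-1), sq_nonneg (a*b), sq_nonneg (a-1), sq_nonneg (a+1),
    sq_nonneg (a*b-b), sq_nonneg (a^2-1+2*b^2), sq_nonneg (a^2+b^2-1+2*b^2),
    mul_nonneg ha (sq_nonneg (a-1)), mul_nonneg ha (sq_nonneg b),
    mul_nonneg (sub_nonneg.2 hab) (sq_nonneg (a-1)), sq_nonneg b, sq_nonneg (b*(a-1))]

lemma key (c a b : ℝ) (hc0 : 0 < c) (hc1 : c ≤ 1) (ha : 0 ≤ a) (hab : b^2 ≤ a^2) :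
    (c/8) * (b^2 + (a-1)^2) ≤ (1/4)*(a^2+b^2-1)^2 + c*a^2*b^2 := by
  nlinarith [keyH a b ha hab, sq_nonneg (a^2+b^2-1),
    mul_nonneg (sub_nonneg.2 hc1) (sq_nonneg (a^2+b^2-1))]

set_option maxHeartbeats 1000000 in
/-- For every `g > 1` there is `K > 0` with
`P(a,b) ≥ K · min{(b−1)²+a², (b+1)²+a², b²+(a−1)², b²+(a+1)²}` for all `(a,b)`,
and consequently `√(a²+b²) ≤ 1 + √(P(a,b)/K)`. -/
theorem P_lower_bound (g : ℝ) (hg : 1 < g) :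
    ∃ K > (0 : ℝ), ∀ a b : ℝ,
      K * min (min ((b - 1) ^ 2 + a ^ 2) ((b + 1) ^ 2 + a ^ 2))
              (min (b ^ 2 + (a - 1) ^ 2) (b ^ 2 + (a + 1) ^ 2)) ≤ Pfun g a b ∧
      Real.sqrt (a ^ 2 + b ^ 2) ≤ 1 + Real.sqrt (Pfun g a b / K) := by
  set c : ℝ := min 1 ((g - 1) / 2) with hc
  have hc0 : 0 < c := lt_min one_pos (by linarith)
  have hc1 : c ≤ 1 := min_le_left _ _
  have hcg : c ≤ (g - 1) / 2 := min_le_right _ _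
  refine ⟨c / 8, by positivity, fun a b => ?_⟩
  set m : ℝ := min (min ((b - 1) ^ 2 + a ^ 2) ((b + 1) ^ 2 + a ^ 2))
              (min (b ^ 2 + (a - 1) ^ 2) (b ^ 2 + (a + 1) ^ 2)) with hm
  have hPc : (1/4)*(a^2+b^2-1)^2 + c*a^2*b^2 ≤ Pfun g a b := by
    have : c * a^2*b^2 ≤ (1/2)*(g-1) * a^2*b^2 := by
      have := sq_nonneg (a*b)
      nlinarith
    simp only [Pfun]; nlinarith
  have h1 : c / 8 * m ≤ Pfun g a b := by
    rcases le_total (b^2) (a^2) with hab | hab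
    · rcases le_total 0 a with ha | ha
      · have hk := key c a b hc0 hc1 ha hab
        have : m ≤ b ^ 2 + (a - 1) ^ 2 :=
          le_trans (min_le_right _ _) (min_le_left _ _)
        nlinarith
      · have hk := key c (-a) b hc0 hc1 (by linarith) (by nlinarith)
        have : m ≤ b ^ 2 + (a + 1) ^ 2 :=
          le_trans (min_le_right _ _) (min_le_right _ _)
        nlinarith
    · rcases le_total 0 b with hb | hb
      · have hk := key c b a hc0 hc1 hb hab
        have : m ≤ (b - 1) ^ 2 + a ^ 2 :=
          le_trans (min_le_left _ _) (min_le_left _ _)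
        nlinarith
      · have hk := key c (-b) a hc0 hc1 (by linarith) (by nlinarith)
        have : m ≤ (b + 1) ^ 2 + a ^ 2 :=
          le_trans (min_le_left _ _) (min_le_right _ _)
        nlinarith
  refine ⟨h1, ?_⟩
  set s : ℝ := Real.sqrt (a ^ 2 + b ^ 2) with hs
  have hs0 : 0 ≤ s := Real.sqrt_nonneg _
  have hs2 : s ^ 2 = a ^ 2 + b ^ 2 := Real.sq_sqrt (by positivity)
  have hbs : b ≤ s := by
    have : b ≤ Real.sqrt (b ^ 2) := by
      rw [Real.sqrt_sq_eq_abs]; exact le_abs_self b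
    exact this.trans (Real.sqrt_le_sqrt (by linarith [sq_nonneg a, sq_nonneg b]))
  have hbs' : -b ≤ s := by
    have : -b ≤ Real.sqrt (b ^ 2) := by
      rw [Real.sqrt_sq_eq_abs]; exact neg_le_abs b
    exact this.trans (Real.sqrt_le_sqrt (by linarith [sq_nonneg a, sq_nonneg b]))
  have has : a ≤ s := by
    have : a ≤ Real.sqrt (a ^ 2) := by
      rw [Real.sqrt_sq_eq_abs]; exact le_abs_self a
    exact this.trans (Real.sqrt_le_sqrt (by linarith [sq_nonneg a, sq_nonneg b]))
  have has' : -a ≤ s := by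
    have : -a ≤ Real.sqrt (a ^ 2) := by
      rw [Real.sqrt_sq_eq_abs]; exact neg_le_abs a
    exact this.trans (Real.sqrt_le_sqrt (by linarith [sq_nonneg a, sq_nonneg b]))
  have hms : (s - 1) ^ 2 ≤ m := by
    refine le_min (le_min (by nlinarith) (by nlinarith))
      (le_min (by nlinarith) (by nlinarith))
  have hmP : m ≤ Pfun g a b / (c / 8) := by
    rw [le_div_iff₀ (by positivity)]; linarith [h1]
  have : s - 1 ≤ Real.sqrt (Pfun g a b / (c / 8)) := by
    calc s - 1 ≤ |s - 1| := le_abs_self _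
    _ = Real.sqrt ((s - 1) ^ 2) := (Real.sqrt_sq_eq_abs _).symm
    _ ≤ Real.sqrt (Pfun g a b / (c / 8)) := Real.sqrt_le_sqrt (hms.trans hmP)
  linarith
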